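/- arXiv:2405.03637 — 3 statements merged into one kernel-verified Lean document; each statement's English description precedes it below -/
import Mathlib

section
/- Veltkamp splitting: let p ≥ 4, let RN be a round-to-nearest function for precision p, let a be a precision-p binary floating-point number, and set c = ⌊p/2⌋. Define t = RN((2^c + 1)·a), a_hi = RN(t − RN(t − a)), and a_lo = RN(a − a_hi). Then a_hi + a_lo = a exactly, and both a_hi and a_lo are precision-⌈p/2⌉ binary floating-point numbers. -/
/-- A precision-`p` binary floating-point number (unbounded exponent):
a real of the form `m * 2 ^ e` with `m e : ℤ` and `|m| < 2 ^ p`. -/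
def FloatRep (p : ℕ) (x : ℝ) : Prop :=
  ∃ m e : ℤ, |m| < 2 ^ p ∧ x = (m : ℝ) * (2 : ℝ) ^ e

/-- `RN` is a round-to-nearest function for precision `p`: `RN x` is a
precision-`p` float and is at least as close to `x` as any precision-`p`
float (ties broken arbitrarily). -/
def IsRoundNearest (p : ℕ) (RN : ℝ → ℝ) : Prop :=
  ∀ x : ℝ, FloatRep p (RN x) ∧ ∀ f : ℝ, FloatRep p f → |RN x - x| ≤ |f - x|

/-- For nonzero `x`, `ulp x = 2 ^ (⌊log₂ |x|⌋ - p + 1)`. -/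
noncomputable def ulp (p : ℕ) (x : ℝ) : ℝ :=
  (2 : ℝ) ^ (Int.log 2 |x| - (p : ℤ) + 1)

namespace VeltAux


lemma fr_zero (p : ℕ) : FloatRep p 0 :=
  ⟨0, 0, by positivity, by norm_num⟩

lemma fr_neg {p : ℕ} {x : ℝ} (h : FloatRep p x) : FloatRep p (-x) := by
  obtain ⟨m, e, h1, h2⟩ := h
  exact ⟨-m, e, by simpa using h1, by rw [h2]; push_cast; ring⟩

lemma fr_mul_zpow {p : ℕ} {x : ℝ} (k : ℤ) (h : FloatRep p x) : FloatRep p (x * 2 ^ k) := by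
  obtain ⟨m, e, h1, h2⟩ := h
  exact ⟨m, e + k, h1, by rw [h2, zpow_add₀ (by norm_num : (2:ℝ) ≠ 0)]; ring⟩

lemma fr_int_mul {p : ℕ} (hp : 1 ≤ p) (k : ℤ) (e : ℤ) (hk : |k| ≤ 2 ^ p) :
    FloatRep p ((k : ℝ) * 2 ^ e) := by
  rcases lt_or_eq_of_le hk with h | h
  · exact ⟨k, e, h, rfl⟩
  · have h2 : (2:ℝ) ^ p = 2 ^ (p - 1) * 2 := by
      rw [← pow_succ, Nat.sub_add_cancel hp]
    have hm : |(2:ℤ) ^ (p-1)| < 2 ^ p := by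
      rw [abs_of_nonneg (by positivity)]
      exact pow_lt_pow_right₀ (by norm_num) (by omega)
    rcases abs_eq (by positivity : (0:ℤ) ≤ 2 ^ p) |>.mp h with hk' | hk'
    · refine ⟨2 ^ (p-1), e + 1, hm, ?_⟩
      rw [hk', zpow_add₀ (by norm_num : (2:ℝ) ≠ 0)]
      push_cast
      rw [h2]; ring
    · refine ⟨-(2 ^ (p-1)), e + 1, by simpa using hm, ?_⟩
      rw [hk', zpow_add₀ (by norm_num : (2:ℝ) ≠ 0)]
      push_cast
      rw [h2]; ring

variable {p : ℕ} {RN : ℝ → ℝ}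

lemma RN_exact (hRN : IsRoundNearest p RN) {x : ℝ} (hx : FloatRep p x) : RN x = x := by
  have h := (hRN x).2 x hx
  simp only [sub_self, abs_zero] at h
  have := abs_nonneg (RN x - x)
  have : |RN x - x| = 0 := le_antisymm h this
  have := abs_eq_zero.mp this
  linarith

lemma RN_ge (hRN : IsRoundNearest p RN) {f x : ℝ} (hf : FloatRep p f) (hfx : f ≤ x) :
    f ≤ RN x := by
  have h := (hRN x).2 f hf
  rw [abs_sub_comm f x, abs_of_nonneg (by linarith : (0:ℝ) ≤ x - f)] at h
  have := (abs_le.mp h).1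
  linarith

lemma RN_le (hRN : IsRoundNearest p RN) {f x : ℝ} (hf : FloatRep p f) (hfx : x ≤ f) :
    RN x ≤ f := by
  have h := (hRN x).2 f hf
  rw [abs_of_nonneg (by linarith : (0:ℝ) ≤ f - x)] at h
  have := (abs_le.mp h).2
  linarith

lemma RN_err (hRN : IsRoundNearest p RN) (hp : 1 ≤ p) (x : ℝ) (n : ℕ)
    (hx : |x| ≤ 2 ^ p * 2 ^ n) : |RN x - x| ≤ 2 ^ n / 2 := by
  have h2n : (0:ℝ) < 2 ^ n := by positivity
  set y := x / 2 ^ n with hy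
  have hyb : |y| ≤ 2 ^ p := by
    rw [hy, abs_div, abs_of_pos h2n, div_le_iff₀ h2n]
    exact hx
  have hr : |y - (round y : ℝ)| ≤ 1 / 2 := abs_sub_round y
  have hk : |round y| ≤ 2 ^ p := by
    have h1 : |(round y : ℝ)| ≤ 2 ^ p + 1 / 2 := by
      calc |(round y : ℝ)| = |y - (y - (round y : ℝ))| := by ring_nf
        _ ≤ |y| + |y - (round y : ℝ)| := abs_sub _ _
        _ ≤ 2 ^ p + 1 / 2 := by linarith
    have h2 : (|round y| : ℝ) < 2 ^ p + 1 := by push_cast; linarith [abs_le.mp h1]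
    have h3 : |round y| < 2 ^ p + 1 := by exact_mod_cast h2
    omega
  have hf : FloatRep p ((round y : ℝ) * 2 ^ n) := by
    have := fr_int_mul hp (round y) (n : ℤ) hk
    rwa [zpow_natCast] at this
  calc |RN x - x| ≤ |(round y : ℝ) * 2 ^ n - x| := (hRN x).2 _ hf
    _ = |(round y : ℝ) - y| * 2 ^ n := by
        have hxy : (round y : ℝ) * 2 ^ n - x = ((round y : ℝ) - y) * 2 ^ n := by
          rw [hy]; field_simp
        rw [hxy, abs_mul, abs_of_pos h2n]
    _ ≤ 1 / 2 * 2 ^ n := by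
        rw [abs_sub_comm] at hr
        exact mul_le_mul_of_nonneg_right hr (le_of_lt h2n)
    _ = 2 ^ n / 2 := by ring

lemma mult_of_big (hp : 1 ≤ p) {f : ℝ} (hf : FloatRep p f) (n : ℕ)
    (hbig : 2 ^ (p - 1) * 2 ^ n ≤ |f|) : ∃ K : ℤ, f = (K : ℝ) * 2 ^ n := by
  obtain ⟨m, e, hm, hfe⟩ := hf
  rcases le_or_gt (n : ℤ) e with h | h
  · have key : (2:ℝ) ^ e = 2 ^ (e - (n:ℤ)) * 2 ^ (n:ℤ) := by
      rw [← zpow_add₀ (by norm_num : (2:ℝ) ≠ 0)]; ring_nf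
    refine ⟨m * 2 ^ (e - n).toNat, ?_⟩
    rw [hfe]
    push_cast
    rw [← zpow_natCast (2:ℝ) (e - (n:ℤ)).toNat, Int.toNat_of_nonneg (by omega),
      ← zpow_natCast (2:ℝ) n, key]
    ring
  · exfalso
    have hepos : (0:ℝ) < 2 ^ e := by positivity
    have h1 : |f| < 2 ^ p * (2:ℝ) ^ e := by
      rw [hfe, abs_mul, abs_of_pos hepos]
      have : |(m:ℝ)| < 2 ^ p := by exact_mod_cast hm
      exact mul_lt_mul_of_pos_right this hepos
    have h2 : (2:ℝ) ^ e ≤ 2 ^ ((n:ℤ) - 1) := zpow_le_zpow_right₀ (by norm_num) (by omega)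
    have h3 : (2:ℝ) ^ p * 2 ^ ((n:ℤ) - 1) = 2 ^ (p - 1) * 2 ^ n := by
      rw [← zpow_natCast (2:ℝ) p, ← zpow_natCast (2:ℝ) (p-1), ← zpow_natCast (2:ℝ) n,
        ← zpow_add₀ (by norm_num : (2:ℝ) ≠ 0), ← zpow_add₀ (by norm_num : (2:ℝ) ≠ 0)]
      congr 1
      omega
    nlinarith [pow_pos (by norm_num : (0:ℝ) < 2) p]


set_option maxHeartbeats 10000000 in
lemma core (p c q d : ℕ) (hcd : c = d + 1) (hd : 1 ≤ d) (hcq : c ≤ q) (hpcq : p = c + q)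
    (RN : ℝ → ℝ) (hRN : IsRoundNearest p RN) (a : ℤ)
    (ha1 : (2:ℤ) ^ (p - 1) ≤ a) (ha2 : a < 2 ^ p)
    (t ahi alo : ℝ)
    (ht : t = RN (((2:ℝ) ^ c + 1) * (a:ℝ)))
    (hhi : ahi = RN (t - RN (t - (a:ℝ))))
    (hlo : alo = RN ((a:ℝ) - ahi)) :
    ahi + alo = (a:ℝ) ∧ FloatRep q ahi ∧ FloatRep q alo := by
  have hp1 : 1 ≤ p := by omega
  have hq1 : 1 ≤ q := by omega
  set D : ℝ := 2 ^ d with hDdef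
  set Q : ℝ := 2 ^ q with hQdef
  have hDpos : (0:ℝ) < D := by positivity
  have hQpos : (0:ℝ) < Q := by positivity
  have hD2 : (2:ℝ) ≤ D := by
    calc (2:ℝ) = 2 ^ 1 := (pow_one 2).symm
      _ ≤ 2 ^ d := pow_le_pow_right₀ (by norm_num) hd
  have hQD : 2 * D ≤ Q := by
    have h := pow_le_pow_right₀ (by norm_num : (1:ℝ) ≤ 2) hcq
    rw [hcd, pow_succ] at h
    linarith
  have h2c : (2:ℝ) ^ c = 2 * D := by rw [hcd, pow_succ]; ring
  have h2p : (2:ℝ) ^ p = 2 * D * Q := by rw [hpcq, pow_add, h2c]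
  have hp1' : p - 1 = d + q := by omega
  have h2p1 : (2:ℝ) ^ (p - 1) = D * Q := by rw [hp1', pow_add]
  have haR1 : D * Q ≤ (a:ℝ) := by
    have h : ((2:ℤ) ^ (p - 1) : ℝ) ≤ (a:ℝ) := by exact_mod_cast ha1
    push_cast at h
    rwa [h2p1] at h
  have haR2 : (a:ℝ) ≤ 2 * D * Q - 1 := by
    have h : ((a:ℝ) + 1) ≤ ((2:ℤ)^p : ℝ) := by exact_mod_cast ha2
    push_cast at h
    rw [h2p] at h
    linarith
  -- t bounds
  have hAabs : |((2:ℝ) ^ c + 1) * (a:ℝ)| ≤ 2 ^ p * 2 ^ (c + 1) := by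
    have hc1 : (2:ℝ) ^ (c + 1) = 4 * D := by rw [pow_succ, h2c]; ring
    rw [abs_of_nonneg (by nlinarith), h2p, h2c, hc1]
    nlinarith
  have hE1 : |t - ((2:ℝ) ^ c + 1) * (a:ℝ)| ≤ 2 ^ (c + 1) / 2 := by
    rw [ht]; exact RN_err hRN hp1 _ (c + 1) hAabs
  have hE1' : |t - (2 * D + 1) * (a:ℝ)| ≤ 2 * D := by
    have hc1 : (2:ℝ) ^ (c + 1) / 2 = 2 * D := by rw [pow_succ, h2c]; ring
    rwa [h2c, hc1] at hE1
  obtain ⟨hE1a, hE1b⟩ := abs_le.mp hE1'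
  have htlow : 2 * D * D * Q ≤ t := by nlinarith
  have htpos : 0 < t := lt_of_lt_of_le (by positivity) htlow
  have hmultbase : (2:ℝ) ^ (p - 1) * 2 ^ c = 2 * D * D * Q := by rw [h2p1, h2c]; ring
  have htf : FloatRep p t := by rw [ht]; exact (hRN _).1
  obtain ⟨Kt, hKt⟩ := mult_of_big hp1 htf c
    (by rw [hmultbase, abs_of_pos htpos]; exact htlow)
  have hKt' : t = (Kt:ℝ) * (2 * D) := by rw [hKt, h2c]
  set t2 : ℝ := RN (t - (a:ℝ)) with ht2def
  have ht2f : FloatRep p t2 := (hRN _).1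
  rcases eq_or_lt_of_le ha1 with hcase0 | hbig
  · -- a = 2^(p-1)
    have haval : (a:ℝ) = (2:ℝ) ^ (p - 1) := by
      rw [← hcase0]; push_cast; ring
    have hkb : |(2:ℤ) ^ c + 1| ≤ 2 ^ p := by
      have h := pow_lt_pow_right₀ (by norm_num : (1:ℤ) < 2) (show c < p by omega)
      rw [abs_of_nonneg (by positivity)]
      linarith
    have hAfloat : FloatRep p (((2:ℝ) ^ c + 1) * (a:ℝ)) := by
      have h := fr_int_mul hp1 ((2:ℤ) ^ c + 1) ((p - 1 : ℕ) : ℤ) hkb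
      have heq : (((2:ℤ) ^ c + 1 : ℤ):ℝ) * (2:ℝ) ^ (((p - 1 : ℕ)):ℤ) =
          ((2:ℝ) ^ c + 1) * (a:ℝ) := by
        rw [zpow_natCast, haval]; push_cast; ring
      rwa [heq] at h
    have ht0 : t = ((2:ℝ) ^ c + 1) * (a:ℝ) := by rw [ht]; exact RN_exact hRN hAfloat
    have htafloat : FloatRep p (t - (a:ℝ)) := by
      have h := fr_int_mul hp1 ((2:ℤ) ^ (p - 1)) ((c:ℕ) : ℤ)
        (by rw [abs_of_nonneg (by positivity)]; exact le_of_lt (pow_lt_pow_right₀ (by norm_num) (by omega)))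
      have heq : (((2:ℤ) ^ (p - 1) : ℤ):ℝ) * (2:ℝ) ^ ((c:ℕ) : ℤ) = t - (a:ℝ) := by
        rw [zpow_natCast, ht0, haval]; push_cast; ring
      rwa [heq] at h
    have hRNta : t2 = t - (a:ℝ) := RN_exact hRN htafloat
    have hafloat : FloatRep p (a:ℝ) := by
      refine ⟨a, 0, ?_, by norm_num⟩
      rw [abs_of_nonneg (le_trans (by positivity : (0:ℤ) ≤ 2 ^ (p - 1)) ha1)]
      exact ha2
    have hahi2 : ahi = (a:ℝ) := by
      rw [hhi, hRNta]
      have h : t - (t - (a:ℝ)) = (a:ℝ) := by ring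
      rw [h]
      exact RN_exact hRN hafloat
    have halo2 : alo = 0 := by
      rw [hlo, hahi2, sub_self]
      exact RN_exact hRN (fr_zero p)
    refine ⟨by rw [hahi2, halo2]; ring, ?_, by rw [halo2]; exact fr_zero q⟩
    refine ⟨1, ((p - 1 : ℕ) : ℤ), ?_, ?_⟩
    · have h := pow_lt_pow_right₀ (by norm_num : (1:ℤ) < 2) (show 0 < q by omega)
      simpa using h
    · rw [hahi2, haval, zpow_natCast]; push_cast; ring
  rcases le_or_gt a (2 ^ p - 2 ^ d) with hmain | hclose
  · -- main case
    have haR1' : D * Q + 1 ≤ (a:ℝ) := by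
      have h : ((2:ℤ) ^ (p - 1) : ℝ) + 1 ≤ (a:ℝ) := by exact_mod_cast hbig
      push_cast at h
      rw [h2p1] at h
      linarith
    have haR3 : (a:ℝ) ≤ 2 * D * Q - D := by
      have h : (a:ℝ) ≤ (((2:ℤ) ^ p - 2 ^ d : ℤ) : ℝ) := by exact_mod_cast hmain
      push_cast at h
      rw [h2p] at h
      rw [hDdef]
      push_cast at h ⊢
      linarith
    -- bounds on u = t - a
    have hulow : 2 * D * D * Q ≤ t - (a:ℝ) := by nlinarith
    have huhigh : t - (a:ℝ) ≤ 2 * D * Q * (2 * D) := by nlinarith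
    have huabs : |t - (a:ℝ)| ≤ 2 ^ p * 2 ^ c := by
      rw [abs_of_nonneg (by nlinarith), h2p, h2c]
      linarith
    have hE2 : |t2 - (t - (a:ℝ))| ≤ D := by
      have h := RN_err hRN hp1 (t - (a:ℝ)) c huabs
      rw [← ht2def] at h
      have hc2 : (2:ℝ) ^ c / 2 = D := by rw [h2c]; ring
      rwa [hc2] at h
    obtain ⟨hE2a, hE2b⟩ := abs_le.mp hE2
    have hflow : FloatRep p (2 * D * D * Q) := by
      have h := fr_int_mul hp1 ((2:ℤ) ^ (p - 1)) ((c:ℕ) : ℤ)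
        (by rw [abs_of_nonneg (by positivity)]; exact le_of_lt (pow_lt_pow_right₀ (by norm_num) (by omega)))
      have heq : (((2:ℤ) ^ (p - 1) : ℤ):ℝ) * (2:ℝ) ^ ((c:ℕ) : ℤ) = 2 * D * D * Q := by
        rw [zpow_natCast]; push_cast; rw [← hmultbase]
      rwa [heq] at h
    have ht2low : 2 * D * D * Q ≤ t2 := by
      rw [ht2def]; exact RN_ge hRN hflow hulow
    have ht2pos : 0 < t2 := lt_of_lt_of_le (by positivity) ht2low
    obtain ⟨K2, hK2⟩ := mult_of_big hp1 ht2f c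
      (by rw [hmultbase, abs_of_pos ht2pos]; exact ht2low)
    have heq3 : t - t2 = ((Kt - K2 : ℤ):ℝ) * (2:ℝ) ^ ((c:ℕ) : ℤ) := by
      rw [zpow_natCast, hKt, hK2]; push_cast; ring
    have habs3 : |t - t2| ≤ 2 * D * Q := by
      rw [abs_le]
      constructor <;> nlinarith
    have hKbound : |((Kt - K2 : ℤ):ℝ)| ≤ Q := by
      rw [heq3, abs_mul, abs_of_pos (by positivity : (0:ℝ) < (2:ℝ) ^ ((c:ℕ) : ℤ))] at habs3
      rw [zpow_natCast, h2c] at habs3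
      nlinarith [abs_nonneg ((Kt - K2 : ℤ):ℝ)]
    have hKint : |Kt - K2| ≤ 2 ^ q := by
      have h : |((Kt - K2 : ℤ):ℝ)| ≤ ((2:ℤ) ^ q : ℝ) := by
        push_cast at hKbound ⊢
        rw [← hQdef]
        exact hKbound
      exact_mod_cast h
    have hKintp : |Kt - K2| ≤ 2 ^ p := le_trans hKint (pow_le_pow_right₀ (by norm_num) (by omega))
    have hahif : FloatRep p (t - t2) := by
      rw [heq3]; exact fr_int_mul hp1 _ _ hKintp
    have hahi2 : ahi = t - t2 := by rw [hhi]; exact RN_exact hRN hahif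
    have hfrqahi : FloatRep q ahi := by
      rw [hahi2, heq3]; exact fr_int_mul hq1 _ _ hKint
    obtain ⟨N, hNdef⟩ : ∃ N : ℤ, N = a - (Kt - K2) * 2 ^ c := ⟨_, rfl⟩
    have hN : (N:ℝ) = (a:ℝ) - ahi := by
      rw [hahi2, heq3, hNdef, zpow_natCast]; push_cast; ring
    have hNbound : |(N:ℝ)| ≤ D := by
      rw [hN, hahi2]
      have h : (a:ℝ) - (t - t2) = t2 - (t - (a:ℝ)) := by ring
      rw [h]
      exact hE2
    have hNint : |N| ≤ 2 ^ d := by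
      have h : |(N:ℝ)| ≤ ((2:ℤ) ^ d : ℝ) := by
        push_cast at hNbound ⊢
        rw [← hDdef]
        exact hNbound
      exact_mod_cast h
    have hNf : FloatRep p ((N:ℝ)) := by
      have h := fr_int_mul hp1 N 0 (le_trans hNint (pow_le_pow_right₀ (by norm_num) (by omega)))
      simpa using h
    have halo2 : alo = (N:ℝ) := by
      rw [hlo, ← hN]; exact RN_exact hRN hNf
    have hfrqalo : FloatRep q alo := by
      rw [halo2]
      have h := fr_int_mul hq1 N 0 (le_trans hNint (pow_le_pow_right₀ (by norm_num) (by omega)))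
      simpa using h
    refine ⟨?_, hfrqahi, hfrqalo⟩
    rw [halo2, hN]
    ring
  · -- close to 2^p
    have haR4 : 2 * D * Q - D + 1 ≤ (a:ℝ) := by
      have h1 : (2:ℤ) ^ p - 2 ^ d + 1 ≤ a := Int.add_one_le_iff.mpr hclose
      have h : (((2:ℤ) ^ p - 2 ^ d + 1 : ℤ):ℝ) ≤ (a:ℝ) := by exact_mod_cast h1
      push_cast at h
      rw [h2p, ← hDdef] at h
      linarith
    have hA4 : 2 * D * Q * (2 * D) ≤ ((2:ℝ) ^ c + 1) * (a:ℝ) := by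
      rw [h2c]; nlinarith
    have hf4 : FloatRep p (2 * D * Q * (2 * D)) := by
      have h := fr_int_mul hp1 ((2:ℤ) ^ p) ((c:ℕ) : ℤ)
        (by rw [abs_of_nonneg (by positivity)])
      have heq : (((2:ℤ) ^ p : ℤ):ℝ) * (2:ℝ) ^ ((c:ℕ) : ℤ) = 2 * D * Q * (2 * D) := by
        rw [zpow_natCast]; push_cast; rw [h2p, h2c]
      rwa [heq] at h
    have ht4 : 2 * D * Q * (2 * D) ≤ t := by rw [ht]; exact RN_ge hRN hf4 hA4
    have hglow : 2 * D * D * Q ≤ t - 2 * D * Q := by nlinarith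
    have hghigh : t - 2 * D * Q ≤ 2 * D * Q * (2 * D) - 1 := by
      nlinarith [mul_le_mul_of_nonneg_left haR2 (by positivity : (0:ℝ) ≤ 2 * D + 1)]
    have hg_eq : t - 2 * D * Q = ((Kt - 2 ^ q : ℤ):ℝ) * (2:ℝ) ^ ((c:ℕ) : ℤ) := by
      rw [zpow_natCast, hKt']; push_cast; rw [h2c, hQdef]; ring
    have hgKbound : |((Kt - 2 ^ q : ℤ):ℝ)| ≤ 2 * D * Q := by
      have habs : |t - 2 * D * Q| ≤ 2 * D * Q * (2 * D) := by
        rw [abs_of_nonneg (by nlinarith)]; linarith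
      rw [hg_eq, abs_mul, abs_of_pos (by positivity : (0:ℝ) < (2:ℝ) ^ ((c:ℕ) : ℤ)),
        zpow_natCast, h2c] at habs
      exact le_of_mul_le_mul_right habs (by positivity)
    have hgKint : |Kt - 2 ^ q| ≤ 2 ^ p := by
      have h : |((Kt - 2 ^ q : ℤ):ℝ)| ≤ ((2:ℤ) ^ p : ℝ) := by
        push_cast at hgKbound ⊢
        rw [h2p]
        exact hgKbound
      exact_mod_cast h
    have hgf : FloatRep p (t - 2 * D * Q) := by
      rw [hg_eq]; exact fr_int_mul hp1 _ _ hgKint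
    have hjr1 : 1 ≤ 2 * D * Q - (a:ℝ) := by linarith
    have hjrD : 2 * D * Q - (a:ℝ) ≤ D - 1 := by linarith
    have hE2' : |t2 - (t - (a:ℝ))| ≤ 2 * D * Q - (a:ℝ) := by
      have h := (hRN (t - (a:ℝ))).2 _ hgf
      rw [← ht2def] at h
      have heq : |t - 2 * D * Q - (t - (a:ℝ))| = 2 * D * Q - (a:ℝ) := by
        rw [abs_of_nonpos (by linarith)]; ring
      rwa [heq] at h
    have ht2ge : t - 2 * D * Q ≤ t2 := by
      rw [ht2def]; exact RN_ge hRN hgf (by linarith)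
    have ht2low : 2 * D * D * Q ≤ t2 := le_trans hglow ht2ge
    have ht2pos : 0 < t2 := lt_of_lt_of_le (by positivity) ht2low
    obtain ⟨K2, hK2⟩ := mult_of_big hp1 ht2f c
      (by rw [hmultbase, abs_of_pos ht2pos]; exact ht2low)
    obtain ⟨M, hMdef⟩ : ∃ M : ℤ, M = K2 - (Kt - 2 ^ q) := ⟨_, rfl⟩
    have hMeq : t2 - (t - (a:ℝ)) = (M:ℝ) * (2 * D) - (2 * D * Q - (a:ℝ)) := by
      rw [hK2, hKt', hMdef, h2c]; push_cast; rw [hQdef]; ring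
    have hM0 : M = 0 := by
      rw [hMeq] at hE2'
      obtain ⟨hMa, hMb⟩ := abs_le.mp hE2'
      rcases lt_trichotomy M 0 with h | h | h
      · exfalso
        have hm1 : (M:ℝ) ≤ -1 := by exact_mod_cast Int.le_sub_one_iff.mpr h
        have hh := mul_le_mul_of_nonneg_right hm1 (by positivity : (0:ℝ) ≤ 2 * D)
        linarith
      · exact h
      · exfalso
        have hm1 : (1:ℝ) ≤ (M:ℝ) := by exact_mod_cast h
        have hh := mul_le_mul_of_nonneg_right hm1 (by positivity : (0:ℝ) ≤ 2 * D)
        linarith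
    have ht2val : t2 = t - 2 * D * Q := by
      have hM0' : (M:ℝ) = 0 := by exact_mod_cast hM0
      rw [hM0'] at hMeq
      linarith
    have hf2p : FloatRep p (2 * D * Q) := by
      have h := fr_int_mul hp1 ((2:ℤ) ^ p) 0 (by rw [abs_of_nonneg (by positivity)])
      have heq : (((2:ℤ) ^ p : ℤ):ℝ) * (2:ℝ) ^ (0:ℤ) = 2 * D * Q := by
        push_cast; rw [zpow_zero, mul_one, h2p]
      rwa [heq] at h
    have hahi2 : ahi = 2 * D * Q := by
      rw [hhi, ht2val]
      have h : t - (t - 2 * D * Q) = 2 * D * Q := by ring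
      rw [h]
      exact RN_exact hRN hf2p
    obtain ⟨N, hNdef⟩ : ∃ N : ℤ, N = a - 2 ^ p := ⟨_, rfl⟩
    have hNval : (N:ℝ) = (a:ℝ) - 2 * D * Q := by
      rw [hNdef]; push_cast; rw [h2p]
    have hNint : |N| ≤ 2 ^ d - 1 := by
      rw [hNdef, abs_of_nonpos (by linarith)]
      linarith
    have hNintq : |N| < 2 ^ q := by
      have h1 : (2:ℤ) ^ d ≤ 2 ^ q := pow_le_pow_right₀ (by norm_num) (by omega)
      linarith
    have hNintp : |N| ≤ 2 ^ p := by
      have h1 : (2:ℤ) ^ q ≤ 2 ^ p := pow_le_pow_right₀ (by norm_num) (by omega)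
      linarith
    have hNf : FloatRep p ((N:ℝ)) := by
      have h := fr_int_mul hp1 N 0 hNintp
      simpa using h
    have halo2 : alo = (N:ℝ) := by
      rw [hlo, hahi2, ← hNval]
      exact RN_exact hRN hNf
    refine ⟨?_, ?_, ?_⟩
    · rw [hahi2, halo2, hNval]; ring
    · refine ⟨1, ((p:ℕ) : ℤ), ?_, ?_⟩
      · have h := pow_lt_pow_right₀ (by norm_num : (1:ℤ) < 2) (show 0 < q by omega)
        simpa using h
      · rw [hahi2, zpow_natCast]; push_cast; rw [h2p]; ring
    · rw [halo2]
      exact ⟨N, 0, hNintq, by norm_num⟩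


lemma fr_mul_unit {p : ℕ} {x ε : ℝ} (hε : ε = 1 ∨ ε = -1) (e : ℤ)
    (h : FloatRep p x) : FloatRep p (x * (ε * 2 ^ e)) := by
  rcases hε with h1 | h1
  · rw [h1, one_mul]; exact fr_mul_zpow e h
  · rw [h1]
    have := fr_neg (fr_mul_zpow e h)
    have heq : -(x * 2 ^ e) = x * (-1 * 2 ^ e) := by ring
    rwa [heq] at this


end VeltAux

open VeltAux in
/-- Veltkamp splitting: with `c = ⌊p/2⌋`, the split `a = a_hi + a_lo` is exact
and both parts are precision-`⌈p/2⌉` floats. -/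
theorem veltkamp_split (p : ℕ) (hp : 4 ≤ p) (RN : ℝ → ℝ)
    (hRN : IsRoundNearest p RN) (a : ℝ) (ha : FloatRep p a)
    (c : ℕ) (hc : c = p / 2)
    (t ahi alo : ℝ)
    (ht : t = RN (((2 : ℝ) ^ c + 1) * a))
    (hhi : ahi = RN (t - RN (t - a)))
    (hlo : alo = RN (a - ahi)) :
    ahi + alo = a ∧ FloatRep ((p + 1) / 2) ahi ∧ FloatRep ((p + 1) / 2) alo := by
  obtain ⟨m0, e0, hm0, hae0⟩ := ha
  by_cases hz : a = 0
  · subst hz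
    have h0 : ((2:ℝ) ^ c + 1) * (0:ℝ) = 0 := by ring
    have ht0 : t = 0 := by rw [ht, h0]; exact RN_exact hRN (fr_zero p)
    have ht20 : RN (t - 0) = 0 := by
      rw [ht0, sub_zero]; exact RN_exact hRN (fr_zero p)
    have hahi0 : ahi = 0 := by
      rw [hhi, ht20, ht0, sub_zero]; exact RN_exact hRN (fr_zero p)
    have halo0 : alo = 0 := by
      rw [hlo, hahi0, sub_zero]; exact RN_exact hRN (fr_zero p)
    exact ⟨by rw [hahi0, halo0]; ring, by rw [hahi0]; exact fr_zero _,
      by rw [halo0]; exact fr_zero _⟩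
  · have hm0ne : m0 ≠ 0 := by
      rintro rfl
      simp at hae0
      exact hz hae0
    -- normalization
    set n : ℕ := m0.natAbs with hn
    have hnne : n ≠ 0 := Int.natAbs_ne_zero.mpr hm0ne
    have hnlt : n < 2 ^ p := by
      have : (m0.natAbs : ℤ) < 2 ^ p := by rwa [Int.abs_eq_natAbs] at hm0
      exact_mod_cast this
    set L : ℕ := Nat.log 2 n with hL
    have hLp : L < p := Nat.log_lt_of_lt_pow hnne hnlt
    set k : ℕ := p - 1 - L with hk
    have hlow : 2 ^ (p - 1) ≤ n * 2 ^ k := by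
      calc 2 ^ (p - 1) = 2 ^ L * 2 ^ k := by rw [← pow_add]; congr 1; omega
        _ ≤ n * 2 ^ k := Nat.mul_le_mul_right _ (Nat.pow_log_le_self 2 hnne)
    have hhigh : n * 2 ^ k < 2 ^ p := by
      calc n * 2 ^ k < 2 ^ (L + 1) * 2 ^ k :=
            mul_lt_mul_of_pos_right (Nat.lt_pow_succ_log_self (by norm_num) n)
              (by positivity)
        _ = 2 ^ p := by rw [← pow_add]; congr 1; omega
    set b : ℤ := ((n * 2 ^ k : ℕ) : ℤ) with hb
    have hb1 : (2:ℤ) ^ (p - 1) ≤ b := by rw [hb]; exact_mod_cast hlow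
    have hb2 : b < 2 ^ p := by rw [hb]; exact_mod_cast hhigh
    set ε : ℝ := if 0 < m0 then 1 else -1 with hεdef
    have hεpm : ε = 1 ∨ ε = -1 := by
      rw [hεdef]; split <;> simp
    have hεsq : ε * ε = 1 := by rcases hεpm with h | h <;> rw [h] <;> norm_num
    set e' : ℤ := e0 - k with he'
    set u : ℝ := ε * 2 ^ e' with hu
    set v : ℝ := ε * 2 ^ (-e') with hv
    have huv : u * v = 1 := by
      rw [hu, hv]
      have : (2:ℝ) ^ e' * 2 ^ (-e') = 1 := by
        rw [← zpow_add₀ (by norm_num : (2:ℝ) ≠ 0)]; simp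
      calc ε * 2 ^ e' * (ε * 2 ^ (-e')) = (ε * ε) * ((2:ℝ) ^ e' * 2 ^ (-e')) := by ring
        _ = 1 := by rw [hεsq, this]; norm_num
    have hbu : (b:ℝ) * u = a := by
      have hbr : (b:ℝ) = |(m0:ℝ)| * 2 ^ k := by
        rw [hb]
        push_cast
        rw [hn, Nat.cast_natAbs, Int.cast_abs]
      have hεabs : ε * |(m0:ℝ)| = (m0:ℝ) := by
        rcases lt_trichotomy m0 0 with h | h | h
        · have h1 : (m0:ℝ) < 0 := by exact_mod_cast h
          rw [hεdef, if_neg (by omega), abs_of_neg h1]; ring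
        · exact absurd h hm0ne
        · have h1 : (0:ℝ) < (m0:ℝ) := by exact_mod_cast h
          rw [hεdef, if_pos h, abs_of_pos h1]; ring
      have hpow : (2:ℝ) ^ (k:ℕ) * (2:ℝ) ^ e' = 2 ^ e0 := by
        rw [he', ← zpow_natCast (2:ℝ) k, ← zpow_add₀ (by norm_num : (2:ℝ) ≠ 0)]
        congr 1
        omega
      rw [hae0, hbr, hu]
      calc |(m0:ℝ)| * 2 ^ (k:ℕ) * (ε * 2 ^ e') = (ε * |(m0:ℝ)|) * ((2:ℝ) ^ (k:ℕ) * 2 ^ e') := by ring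
        _ = (m0:ℝ) * 2 ^ e0 := by rw [hεabs, hpow]
    -- the scaled rounding function
    set RN₂ : ℝ → ℝ := fun x => RN (x * u) * v with hRN₂
    have hRN₂mul : ∀ x : ℝ, RN₂ x * u = RN (x * u) := by
      intro x
      rw [hRN₂]
      calc RN (x * u) * v * u = RN (x * u) * (u * v) := by ring
        _ = RN (x * u) := by rw [huv]; ring
    have habsu : |u| * |v| = 1 := by rw [← abs_mul, huv]; norm_num
    have hRN₂isRN : IsRoundNearest p RN₂ := by
      intro x
      constructor
      · rw [hRN₂]
        exact fr_mul_unit hεpm (-e') ((hRN (x * u)).1)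
      · intro f hf
        have hfu : FloatRep p (f * u) := fr_mul_unit hεpm e' hf
        have h1 := (hRN (x * u)).2 (f * u) hfu
        have heq1 : RN₂ x - x = (RN (x * u) - x * u) * v := by
          rw [hRN₂]
          have hxvu : x * u * v = x := by rw [mul_assoc, huv, mul_one]
          calc RN (x * u) * v - x = RN (x * u) * v - x * u * v := by rw [hxvu]
            _ = (RN (x * u) - x * u) * v := by ring
        have heq2 : |f * u - x * u| = |f - x| * |u| := by
          rw [← abs_mul]; congr 1; ring
        rw [heq1, abs_mul]
        calc |RN (x * u) - x * u| * |v| ≤ |f - x| * |u| * |v| := by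
              rw [← heq2]
              exact mul_le_mul_of_nonneg_right h1 (abs_nonneg v)
          _ = |f - x| := by rw [mul_assoc, habsu, mul_one]
    -- apply core
    set q : ℕ := (p + 1) / 2 with hq
    set d : ℕ := c - 1 with hd
    obtain ⟨hsum, hfr1, hfr2⟩ := core p c q d (by omega) (by omega) (by omega) (by omega)
      RN₂ hRN₂isRN b hb1 hb2
      (RN₂ (((2:ℝ) ^ c + 1) * (b:ℝ)))
      (RN₂ (RN₂ (((2:ℝ) ^ c + 1) * (b:ℝ)) - RN₂ (RN₂ (((2:ℝ) ^ c + 1) * (b:ℝ)) - (b:ℝ))))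
      (RN₂ ((b:ℝ) - RN₂ (RN₂ (((2:ℝ) ^ c + 1) * (b:ℝ)) - RN₂ (RN₂ (((2:ℝ) ^ c + 1) * (b:ℝ)) - (b:ℝ)))))
      rfl rfl rfl
    set t' := RN₂ (((2:ℝ) ^ c + 1) * (b:ℝ)) with ht'
    set ahi' := RN₂ (t' - RN₂ (t' - (b:ℝ))) with hahi'
    set alo' := RN₂ ((b:ℝ) - ahi') with halo'
    -- transfer
    have htt : t = t' * u := by
      rw [ht, hRN₂mul]
      congr 1
      rw [← hbu]; ring
    have ht2t : RN (t - a) = RN₂ (t' - (b:ℝ)) * u := by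
      rw [hRN₂mul]
      congr 1
      rw [htt, ← hbu]; ring
    have hahit : ahi = ahi' * u := by
      rw [hhi, hRN₂mul]
      congr 1
      rw [ht2t, htt]; ring
    have halot : alo = alo' * u := by
      rw [hlo, hRN₂mul]
      congr 1
      rw [hahit, ← hbu]; ring
    refine ⟨?_, ?_, ?_⟩
    · rw [hahit, halot, ← hbu]
      calc ahi' * u + alo' * u = (ahi' + alo') * u := by ring
        _ = (b:ℝ) * u := by rw [hsum]
    · rw [hahit, hu]
      exact fr_mul_unit hεpm e' hfr1
    · rw [halot, hu]
      exact fr_mul_unit hεpm e' hfr2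
end

section
/- Exactness of the Grow step: let p ≥ 1, let RN be a round-to-nearest function for precision p, let x, y, a be precision-p binary floating-point numbers with |x| ≥ |a|. Set u₁ = RN(x + a) and v = RN(a − RN(u₁ − x)) (so (u₁, v) = Fast2Sum(x, a)). Assume the inner sum y + v is itself a precision-p binary floating-point number and |u₁| ≥ |y + v|, and set u = RN(u₁ + (y + v)) and w = RN((y + v) − RN(u − u₁)) (so (u, w) = Fast2Sum(u₁, y + v)). Then u + w = x + y + a exactly. -/
section GrowAux

lemma two_zpow_pos (g : ℤ) : (0:ℝ) < 2 ^ g := zpow_pos (by norm_num) g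

lemma floatRep_zero (p : ℕ) : FloatRep p 0 :=
  ⟨0, 0, by simpa using pow_pos (by norm_num : (0:ℤ) < 2) p, by simp⟩

lemma floatRep_neg {p : ℕ} {x : ℝ} (h : FloatRep p x) : FloatRep p (-x) := by
  obtain ⟨m, e, hm, he⟩ := h
  exact ⟨-m, e, by simpa using hm, by rw [he]; push_cast; ring⟩

lemma zpow_split (g h : ℤ) (hle : h ≤ g) :
    (2:ℝ)^g = 2^((g-h).toNat) * 2^h := by
  rw [← zpow_natCast (2:ℝ) ((g-h).toNat), Int.toNat_of_nonneg (by omega),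
    ← zpow_add₀ (by norm_num : (2:ℝ) ≠ 0)]
  congr 1; omega

lemma mult_add' (K1 g1 K2 g2 : ℤ) (h : g2 ≤ g1) :
    ∃ K : ℤ, (K1:ℝ)*2^g1 + (K2:ℝ)*2^g2 = (K:ℝ)*2^g2 := by
  refine ⟨K1*2^((g1 - g2).toNat) + K2, ?_⟩
  rw [zpow_split g1 g2 h]
  push_cast
  ring

lemma mult_float {p : ℕ} (hp : 1 ≤ p) (K g : ℤ) (hK : |K| ≤ 2^p) :
    FloatRep p ((K:ℝ) * 2^g) := by
  rcases lt_or_eq_of_le hK with h | h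
  · exact ⟨K, g, h, rfl⟩
  · have h2 : K = 2^p ∨ K = -(2^p) := (abs_eq (by positivity)).mp h.symm.symm
    have hpm : (2:ℤ)^(p-1) < 2^p := by
      exact pow_lt_pow_right₀ (by norm_num) (by omega)
    have hcast : ((2:ℝ))^(p-1) * 2 = 2^p := by
      rw [← pow_succ]; congr 1; omega
    rcases h2 with rfl | rfl
    · refine ⟨2^(p-1), g+1, by rwa [abs_of_nonneg (by positivity)], ?_⟩
      rw [zpow_add₀ (by norm_num : (2:ℝ) ≠ 0)]
      push_cast
      rw [← hcast]; ring
    · refine ⟨-(2^(p-1)), g+1, by rwa [abs_neg, abs_of_nonneg (by positivity)], ?_⟩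
      rw [zpow_add₀ (by norm_num : (2:ℝ) ≠ 0)]
      push_cast
      rw [← hcast]; ring

lemma RN_fixed {p : ℕ} {RN : ℝ → ℝ} (hRN : IsRoundNearest p RN) {f : ℝ}
    (hf : FloatRep p f) : RN f = f := by
  have h := (hRN f).2 f hf
  simp only [sub_self, abs_zero] at h
  have := abs_nonneg (RN f - f)
  have h0 : |RN f - f| = 0 := le_antisymm h this
  have := abs_eq_zero.mp h0
  linarith

lemma RN_mono {p : ℕ} {RN : ℝ → ℝ} (hRN : IsRoundNearest p RN) {s t : ℝ}
    (hst : s ≤ t) : RN s ≤ RN t := by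
  rcases eq_or_lt_of_le hst with rfl | hlt
  · exact le_refl _
  by_contra hcon
  push_neg at hcon
  have h1 := (hRN s).2 (RN t) (hRN t).1
  have h2 := (hRN t).2 (RN s) (hRN s).1
  have q1 : (RN s - s)^2 ≤ (RN t - s)^2 := by
    rw [← sq_abs (RN s - s), ← sq_abs (RN t - s)]
    exact pow_le_pow_left₀ (abs_nonneg _) h1 2
  have q2 : (RN t - t)^2 ≤ (RN s - t)^2 := by
    rw [← sq_abs (RN t - t), ← sq_abs (RN s - t)]
    exact pow_le_pow_left₀ (abs_nonneg _) h2 2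
  nlinarith [hlt, hcon]

lemma round_near {p : ℕ} (hp : 1 ≤ p) {RN : ℝ → ℝ} (hRN : IsRoundNearest p RN)
    (t : ℝ) (ht : t ≠ 0) :
    |RN t - t| ≤ 2 ^ (Int.log 2 |t| - p) ∧
      ∃ K : ℤ, RN t = (K:ℝ) * 2 ^ (Int.log 2 |t| - p) := by
  set E : ℤ := Int.log 2 |t| with hE
  have htpos : (0:ℝ) < |t| := abs_pos.mpr ht
  have h1 : (2:ℝ)^E ≤ |t| := Int.zpow_log_le_self (by norm_num) htpos
  have h2 : |t| < 2^(E+1) := Int.lt_zpow_succ_log_self (by norm_num) _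
  set g : ℤ := E - p + 1 with hg
  have hgpos := two_zpow_pos g
  set m1 : ℤ := ⌊|t| / 2^g⌋ with hm1
  have hpow1 : (2:ℝ)^((p:ℤ)-1) * 2^g = 2^E := by
    rw [← zpow_add₀ (by norm_num : (2:ℝ) ≠ 0)]; congr 1; omega
  have hpow2 : (2:ℝ)^(p:ℤ) * 2^g = 2^(E+1) := by
    rw [← zpow_add₀ (by norm_num : (2:ℝ) ≠ 0)]; congr 1; omega
  have hcastp1 : ((2^(p-1) : ℤ) : ℝ) = (2:ℝ)^((p:ℤ)-1) := by
    push_cast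
    rw [← zpow_natCast (2:ℝ) (p-1)]
    congr 1; omega
  have hcastp : ((2^p : ℤ) : ℝ) = (2:ℝ)^(p:ℤ) := by
    push_cast
    rw [← zpow_natCast (2:ℝ) p]
  have hm1low : (2:ℤ)^(p-1) ≤ m1 := by
    apply Int.le_floor.mpr
    rw [le_div_iff₀ hgpos, hcastp1, hpow1]
    exact h1
  have hm1high : m1 < 2^p := by
    apply Int.floor_lt.mpr
    rw [div_lt_iff₀ hgpos, hcastp, hpow2]
    exact h2
  have hm1pos : (0:ℤ) < m1 := lt_of_lt_of_le (pow_pos (by norm_num) _) hm1low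
  have hle1 : (m1:ℝ) * 2^g ≤ |t| := by
    rw [← le_div_iff₀ hgpos]; exact Int.floor_le _
  have hle2 : |t| < ((m1:ℝ) + 1) * 2^g := by
    rw [← div_lt_iff₀ hgpos]; exact Int.lt_floor_add_one _
  have hf1 : FloatRep p ((m1:ℝ) * 2^g) :=
    ⟨m1, g, by rwa [abs_of_pos hm1pos], rfl⟩
  have hf2 : FloatRep p (((m1:ℝ) + 1) * 2^g) := by
    have : (((m1 + 1 : ℤ)):ℝ) * 2^g = ((m1:ℝ) + 1) * 2^g := by push_cast; ring
    rw [← this]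
    exact mult_float hp (m1+1) g (by rw [abs_of_pos (by omega)]; omega)
  -- error bound
  have herr : |RN t - t| ≤ 2 ^ (E - p) := by
    have h2g : (2:ℝ)^g = 2^(E - (p:ℤ)) * 2 := by
      rw [hg, show E - (p:ℤ) + 1 = (E - (p:ℤ)) + 1 from rfl,
        zpow_add_one₀ (by norm_num : (2:ℝ) ≠ 0)]
    have e1' : |RN t - t| ≤ |t| - (m1:ℝ) * 2^g := by
      rcases ht.lt_or_gt with hneg | hpos
      · have habs : |t| = -t := abs_of_neg hneg
        have e1 := (hRN t).2 _ (floatRep_neg hf1)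
        have hv : |-((m1:ℝ) * 2^g) - t| = |t| - (m1:ℝ) * 2^g := by
          rw [show -((m1:ℝ) * 2^g) - t = -((m1:ℝ)*2^g - |t|) by rw [habs]; ring,
            abs_neg, abs_of_nonpos (by linarith : (m1:ℝ)*2^g - |t| ≤ 0)]
          ring
        rwa [hv] at e1
      · have habs : |t| = t := abs_of_pos hpos
        have e1 := (hRN t).2 _ hf1
        have hv : |(m1:ℝ) * 2^g - t| = |t| - (m1:ℝ) * 2^g := by
          rw [show (m1:ℝ) * 2^g - t = (m1:ℝ)*2^g - |t| by rw [habs],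
            abs_of_nonpos (by linarith : (m1:ℝ)*2^g - |t| ≤ 0)]
          ring
        rwa [hv] at e1
    have e2' : |RN t - t| ≤ ((m1:ℝ)+1) * 2^g - |t| := by
      rcases ht.lt_or_gt with hneg | hpos
      · have habs : |t| = -t := abs_of_neg hneg
        have e2 := (hRN t).2 _ (floatRep_neg hf2)
        have hv : |-(((m1:ℝ)+1) * 2^g) - t| = ((m1:ℝ)+1) * 2^g - |t| := by
          rw [show -(((m1:ℝ)+1) * 2^g) - t = -(((m1:ℝ)+1)*2^g - |t|) by rw [habs]; ring,
            abs_neg, abs_of_nonneg (by linarith : (0:ℝ) ≤ ((m1:ℝ)+1)*2^g - |t|)]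
        rwa [hv] at e2
      · have habs : |t| = t := abs_of_pos hpos
        have e2 := (hRN t).2 _ hf2
        have hv : |((m1:ℝ)+1) * 2^g - t| = ((m1:ℝ)+1) * 2^g - |t| := by
          rw [show ((m1:ℝ)+1) * 2^g - t = ((m1:ℝ)+1)*2^g - |t| by rw [habs],
            abs_of_nonneg (by linarith : (0:ℝ) ≤ ((m1:ℝ)+1)*2^g - |t|)]
        rwa [hv] at e2
    linarith
  refine ⟨herr, ?_⟩
  -- RN t is a multiple of 2^(E-p)
  have hEp : (2:ℝ)^(E - (p:ℤ)) ≤ 2^(E-1) :=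
    zpow_le_zpow_right₀ (by norm_num) (by omega)
  have h2E1 : (2:ℝ)^(E-1) * 2 = 2^E := by
    rw [← zpow_add_one₀ (by norm_num : (2:ℝ) ≠ 0)]; congr 1; omega
  have hRNlow : (2:ℝ)^(E-1) ≤ |RN t| := by
    have htri : |t| - |RN t - t| ≤ |RN t| := by
      have := abs_sub_abs_le_abs_sub t (RN t)
      rw [abs_sub_comm t (RN t)] at this
      linarith
    linarith
  obtain ⟨m, e', hm, hrep⟩ := (hRN t).1
  have hmne : m ≠ 0 := by
    rintro rfl
    simp at hrep
    rw [hrep] at hRNlow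
    simp at hRNlow
    nlinarith [two_zpow_pos (E-1)]
  have hmabs : (1:ℝ) ≤ |(m:ℝ)| := by
    rw [← Int.cast_abs]
    exact_mod_cast Int.one_le_abs hmne
  have hmup : |(m:ℝ)| < (2:ℝ)^(p:ℤ) := by
    rw [← Int.cast_abs, ← hcastp]
    exact_mod_cast hm
  have habsRN : |RN t| = |(m:ℝ)| * 2^e' := by
    rw [hrep, abs_mul, abs_of_pos (two_zpow_pos e')]
  have hkey : (2:ℝ)^(E-1) < 2^((p:ℤ) + e') := by
    calc (2:ℝ)^(E-1) ≤ |RN t| := hRNlow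
    _ = |(m:ℝ)| * 2^e' := habsRN
    _ < 2^(p:ℤ) * 2^e' := by nlinarith [two_zpow_pos e']
    _ = 2^((p:ℤ) + e') := by rw [← zpow_add₀ (by norm_num : (2:ℝ) ≠ 0)]
  have he' : E - p ≤ e' := by
    have := (zpow_lt_zpow_iff_right₀ (by norm_num : (1:ℝ) < 2)).mp hkey
    omega
  refine ⟨m * 2^((e' - (E - p)).toNat), ?_⟩
  rw [hrep, zpow_split e' (E - p) he']
  push_cast
  ring

-- casting helper
lemma cast2p (p : ℕ) : ((2^p : ℤ) : ℝ) = (2:ℝ)^(p:ℤ) := by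
  push_cast
  rw [← zpow_natCast (2:ℝ) p]

/-- From a representation of `x+a` as sum of two multiples, and non-floatness,
get `E ≥ p + min exponent`, the multiple structure of `RN (x+a)`, and error bound. -/
lemma sum_not_float_facts {p : ℕ} (hp : 1 ≤ p) {RN : ℝ → ℝ}
    (hRN : IsRoundNearest p RN) {x a : ℝ} {mx ex ma ea : ℤ}
    (hxe : x = (mx:ℝ) * 2^ex) (hae : a = (ma:ℝ) * 2^ea)
    (hfl : ¬ FloatRep p (x + a)) :
    x + a ≠ 0 ∧ (p:ℤ) + min ex ea ≤ Int.log 2 |x+a| ∧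
    |RN (x+a) - (x+a)| ≤ 2 ^ (Int.log 2 |x+a| - p) ∧
      ∃ K : ℤ, RN (x+a) = (K:ℝ) * 2 ^ (Int.log 2 |x+a| - p) := by
  have ht0 : x + a ≠ 0 := fun h => hfl (h ▸ floatRep_zero p)
  set e : ℤ := min ex ea with he
  obtain ⟨M, hM⟩ : ∃ M : ℤ, x + a = (M:ℝ) * 2^e := by
    rcases le_total ex ea with h | h
    · obtain ⟨K, hK⟩ := mult_add' ma ea mx ex h
      refine ⟨K, ?_⟩
      rw [he, min_eq_left h, hxe, hae]
      linarith [hK]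
    · obtain ⟨K, hK⟩ := mult_add' mx ex ma ea h
      refine ⟨K, ?_⟩
      rw [he, min_eq_right h, hxe, hae]
      linarith [hK]
  have hMbig : (2:ℤ)^p ≤ |M| := by
    by_contra h
    push_neg at h
    exact hfl ⟨M, e, h, hM⟩
  have hEe : (p:ℤ) + e ≤ Int.log 2 |x+a| := by
    apply (Int.zpow_le_iff_le_log (by norm_num) (abs_pos.mpr ht0)).mp
    have hc2 : ((2:ℕ):ℝ) = (2:ℝ) := by norm_num
    rw [hc2]
    have : (2:ℝ)^((p:ℤ) + e) = (2:ℝ)^(p:ℤ) * 2^e := by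
      rw [← zpow_add₀ (by norm_num : (2:ℝ) ≠ 0)]
    rw [this, hM, abs_mul, abs_of_pos (two_zpow_pos e)]
    have : (2:ℝ)^(p:ℤ) ≤ |(M:ℝ)| := by
      rw [← cast2p, ← Int.cast_abs]
      exact_mod_cast hMbig
    nlinarith [two_zpow_pos e]
  obtain ⟨herr, hKex⟩ := round_near hp hRN (x+a) ht0
  exact ⟨ht0, hEe, herr, hKex⟩

lemma err_float {p : ℕ} (hp : 1 ≤ p) {RN : ℝ → ℝ} (hRN : IsRoundNearest p RN)
    {x a : ℝ} (hx : FloatRep p x) (ha : FloatRep p a) :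
    FloatRep p (x + a - RN (x + a)) := by
  by_cases hfl : FloatRep p (x + a)
  · rw [RN_fixed hRN hfl]
    simpa using floatRep_zero p
  · obtain ⟨mx, ex, hmx, hxe⟩ := id hx
    obtain ⟨ma, ea, hma, hae⟩ := id ha
    obtain ⟨ht0, hEe, herr, K, hK⟩ := sum_not_float_facts hp hRN hxe hae hfl
    set E : ℤ := Int.log 2 |x+a| with hE
    set e : ℤ := min ex ea with he
    -- RN(x+a) - (x+a) = K' * 2^e
    obtain ⟨Mx, hMx⟩ : ∃ Mx : ℤ, x = (Mx:ℝ) * 2^e := by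
      obtain ⟨K', h'⟩ := mult_add' mx ex 0 e (min_le_left _ _)
      exact ⟨K', by rw [hxe]; simpa using h'⟩
    obtain ⟨Ma, hMa⟩ : ∃ Ma : ℤ, a = (Ma:ℝ) * 2^e := by
      obtain ⟨K', h'⟩ := mult_add' ma ea 0 e (min_le_right _ _)
      exact ⟨K', by rw [hae]; simpa using h'⟩
    obtain ⟨K', hK'⟩ : ∃ K' : ℤ, x + a - RN (x+a) = (K':ℝ) * 2^e := by
      obtain ⟨K2, h2⟩ := mult_add' (-K) (E - p) (Mx + Ma) e (by omega)
      refine ⟨K2, ?_⟩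
      rw [hK, hMx, hMa]
      push_cast at h2 ⊢
      linarith [h2]
    -- bound: |x + a - RN(x+a)| ≤ min (|x|, |a|) < 2^p * 2^e
    have hb1 : |RN (x+a) - (x+a)| ≤ |a| := by
      have := (hRN (x+a)).2 x hx
      rwa [show x - (x+a) = -a by ring, abs_neg] at this
    have hb2 : |RN (x+a) - (x+a)| ≤ |x| := by
      have := (hRN (x+a)).2 a ha
      rwa [show a - (x+a) = -x by ring, abs_neg] at this
    have hxlt : |x| < (2:ℝ)^(p:ℤ) * 2^ex := by
      rw [hxe, abs_mul, abs_of_pos (two_zpow_pos ex)]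
      have : |(mx:ℝ)| < (2:ℝ)^(p:ℤ) := by
        rw [← cast2p, ← Int.cast_abs]; exact_mod_cast hmx
      nlinarith [two_zpow_pos ex]
    have halt : |a| < (2:ℝ)^(p:ℤ) * 2^ea := by
      rw [hae, abs_mul, abs_of_pos (two_zpow_pos ea)]
      have : |(ma:ℝ)| < (2:ℝ)^(p:ℤ) := by
        rw [← cast2p, ← Int.cast_abs]; exact_mod_cast hma
      nlinarith [two_zpow_pos ea]
    have hbound : |(K':ℝ)| * 2^e < (2:ℝ)^(p:ℤ) * 2^e := by
      have h3 : |x + a - RN (x+a)| = |(K':ℝ)| * 2^e := by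
        rw [hK', abs_mul, abs_of_pos (two_zpow_pos e)]
      rcases le_total ex ea with h | h
      · calc |(K':ℝ)| * 2^e = |x + a - RN (x+a)| := h3.symm
          _ = |RN (x+a) - (x+a)| := by rw [abs_sub_comm]
          _ ≤ |x| := hb2
          _ < (2:ℝ)^(p:ℤ) * 2^ex := hxlt
          _ = (2:ℝ)^(p:ℤ) * 2^e := by rw [he, min_eq_left h]
      · calc |(K':ℝ)| * 2^e = |x + a - RN (x+a)| := h3.symm
          _ = |RN (x+a) - (x+a)| := by rw [abs_sub_comm]
          _ ≤ |a| := hb1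
          _ < (2:ℝ)^(p:ℤ) * 2^ea := halt
          _ = (2:ℝ)^(p:ℤ) * 2^e := by rw [he, min_eq_right h]
    have hKp : |K'| < 2^p := by
      have := (mul_lt_mul_iff_left₀ (two_zpow_pos e)).mp hbound
      rw [← cast2p, ← Int.cast_abs] at this
      exact_mod_cast this
    exact ⟨K', e, hKp, hK'⟩

lemma diff_float {p : ℕ} (hp : 1 ≤ p) {RN : ℝ → ℝ} (hRN : IsRoundNearest p RN)
    {x a : ℝ} (hx : FloatRep p x) (ha : FloatRep p a) (hax : |a| ≤ |x|) :
    FloatRep p (RN (x + a) - x) := by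
  by_cases hfl : FloatRep p (x + a)
  · rw [RN_fixed hRN hfl, show x + a - x = a by ring]
    exact ha
  · obtain ⟨mx, ex, hmx, hxe⟩ := id hx
    obtain ⟨ma, ea, hma, hae⟩ := id ha
    obtain ⟨ht0, hEe, herr, K, hK⟩ := sum_not_float_facts hp hRN hxe hae hfl
    set E : ℤ := Int.log 2 |x+a| with hE
    have hx0 : x ≠ 0 := by
      rintro rfl
      have : a = 0 := by
        have := abs_nonneg a
        have hx0' : |(0:ℝ)| = 0 := abs_zero
        rw [hx0'] at hax
        have := abs_eq_zero.mp (le_antisymm hax (abs_nonneg a))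
        exact this
      rw [this] at hfl
      exact hfl (by simpa using floatRep_zero p)
    -- |RN(x+a) - x| ≤ |x| via monotonicity
    have h2xf : FloatRep p (2*x) := by
      refine ⟨mx, ex + 1, hmx, ?_⟩
      rw [hxe, zpow_add_one₀ (by norm_num : (2:ℝ) ≠ 0)]
      ring
    have habs := abs_le.mp hax
    have hdx : |RN (x+a) - x| ≤ |x| := by
      rcases hx0.lt_or_gt with hneg | hpos
      · have hxx : |x| = -x := abs_of_neg hneg
        have l1 : 2*x ≤ x + a := by rw [hxx] at habs; linarith [habs.1]
        have l2 : x + a ≤ 0 := by rw [hxx] at habs; linarith [habs.2]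
        have m1 : 2*x ≤ RN (x+a) := by
          have := RN_mono hRN l1
          rwa [RN_fixed hRN h2xf] at this
        have m2 : RN (x+a) ≤ 0 := by
          have := RN_mono hRN l2
          rwa [RN_fixed hRN (floatRep_zero p)] at this
        rw [hxx]
        rw [abs_le]
        constructor <;> linarith
      · have hxx : |x| = x := abs_of_pos hpos
        have l1 : (0:ℝ) ≤ x + a := by rw [hxx] at habs; linarith [habs.1]
        have l2 : x + a ≤ 2*x := by rw [hxx] at habs; linarith [habs.2]
        have m1 : (0:ℝ) ≤ RN (x+a) := by
          have := RN_mono hRN l1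
          rwa [RN_fixed hRN (floatRep_zero p)] at this
        have m2 : RN (x+a) ≤ 2*x := by
          have := RN_mono hRN l2
          rwa [RN_fixed hRN h2xf] at this
        rw [hxx, abs_le]
        constructor <;> linarith
    rcases le_or_gt ex (E - p) with hcase | hcase
    · -- d is a multiple of 2^ex, |d| ≤ |x| < 2^p * 2^ex
      obtain ⟨K', hK'⟩ : ∃ K' : ℤ, RN (x+a) - x = (K':ℝ) * 2^ex := by
        obtain ⟨K2, h2⟩ := mult_add' K (E - p) (-mx) ex hcase
        refine ⟨K2, ?_⟩
        rw [hK, hxe]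
        push_cast at h2 ⊢
        linarith [h2]
      have hxub : |x| ≤ ((2:ℝ)^(p:ℤ) - 1) * 2^ex := by
        rw [hxe, abs_mul, abs_of_pos (two_zpow_pos ex)]
        have : |(mx:ℝ)| ≤ (2:ℝ)^(p:ℤ) - 1 := by
          have : ((|mx| : ℤ) : ℝ) ≤ ((2^p - 1 : ℤ) : ℝ) := by exact_mod_cast (by omega : |mx| ≤ 2^p - 1)
          rw [Int.cast_abs] at this
          rw [show ((2^p - 1 : ℤ) : ℝ) = (2:ℝ)^(p:ℤ) - 1 by push_cast [← zpow_natCast (2:ℝ) p]; ring] at this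
          exact this
        nlinarith [two_zpow_pos ex]
      have hbd : |(K':ℝ)| * 2^ex < (2:ℝ)^(p:ℤ) * 2^ex := by
        have h3 : |(K':ℝ)| * 2^ex = |RN (x+a) - x| := by
          rw [hK', abs_mul, abs_of_pos (two_zpow_pos ex)]
        have h4 : (0:ℝ) < 2^(p:ℤ) := two_zpow_pos _
        nlinarith [hdx, hxub, two_zpow_pos ex]
      have hKp : |K'| < 2^p := by
        have := (mul_lt_mul_iff_left₀ (two_zpow_pos ex)).mp hbd
        rw [← cast2p, ← Int.cast_abs] at this
        exact_mod_cast this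
      exact ⟨K', ex, hKp, hK'⟩
    · -- E - p < ex, so min = ea ≤ E - p
      have hea : ea ≤ E - p := by
        rcases min_cases ex ea with ⟨hm, _⟩ | ⟨hm, hmle⟩ <;> rw [hm] at hEe <;> omega
      obtain ⟨K', hK'⟩ : ∃ K' : ℤ, RN (x+a) - x = (K':ℝ) * 2^(E - p) := by
        obtain ⟨K2, h2⟩ := mult_add' (-mx) ex K (E - p) hcase.le
        refine ⟨K2, ?_⟩
        rw [hK, hxe]
        push_cast at h2 ⊢
        linarith [h2]
      -- |d| ≤ |RN(x+a)-(x+a)| + |a| ≤ 2^(E-p) + (2^p - 1) 2^(E-p)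
      have haub : |a| ≤ ((2:ℝ)^(p:ℤ) - 1) * 2^(E - p) := by
        have h1 : |a| ≤ ((2:ℝ)^(p:ℤ) - 1) * 2^ea := by
          rw [hae, abs_mul, abs_of_pos (two_zpow_pos ea)]
          have : |(ma:ℝ)| ≤ (2:ℝ)^(p:ℤ) - 1 := by
            have : ((|ma| : ℤ) : ℝ) ≤ ((2^p - 1 : ℤ) : ℝ) := by exact_mod_cast (by omega : |ma| ≤ 2^p - 1)
            rw [Int.cast_abs] at this
            rw [show ((2^p - 1 : ℤ) : ℝ) = (2:ℝ)^(p:ℤ) - 1 by push_cast [← zpow_natCast (2:ℝ) p]; ring] at this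
            exact this
          nlinarith [two_zpow_pos ea]
        have h2 : (2:ℝ)^ea ≤ 2^(E - p) := zpow_le_zpow_right₀ (by norm_num) hea
        have h4 : (1:ℝ) ≤ 2^(p:ℤ) := one_le_zpow₀ (by norm_num) (by positivity)
        nlinarith [two_zpow_pos ea, two_zpow_pos (E - p)]
      have hbd : |(K':ℝ)| * 2^(E-p) ≤ (2:ℝ)^(p:ℤ) * 2^(E-p) := by
        have h3 : |(K':ℝ)| * 2^(E-p) = |RN (x+a) - x| := by
          rw [hK', abs_mul, abs_of_pos (two_zpow_pos (E-p))]
        have h5 : |RN (x+a) - x| ≤ |RN (x+a) - (x+a)| + |a| := by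
          have := abs_sub_abs_le_abs_sub (RN (x+a) - x) (RN (x+a) - (x+a))
          calc |RN (x+a) - x| = |(RN (x+a) - (x+a)) + a| := by ring_nf
            _ ≤ |RN (x+a) - (x+a)| + |a| := abs_add_le _ _
        rw [h3]
        calc |RN (x+a) - x| ≤ |RN (x+a) - (x+a)| + |a| := h5
          _ ≤ 2^(E - (p:ℤ)) + ((2:ℝ)^(p:ℤ) - 1) * 2^(E - p) := by linarith [herr, haub]
          _ = (2:ℝ)^(p:ℤ) * 2^(E-p) := by ring
      have hKp : |K'| ≤ 2^p := by
        have := (mul_le_mul_iff_left₀ (two_zpow_pos (E-p))).mp hbd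
        rw [← cast2p, ← Int.cast_abs] at this
        exact_mod_cast this
      rw [hK']
      exact mult_float hp K' (E-p) hKp

lemma fast2sum {p : ℕ} (hp : 1 ≤ p) {RN : ℝ → ℝ} (hRN : IsRoundNearest p RN)
    {x a : ℝ} (hx : FloatRep p x) (ha : FloatRep p a) (hax : |a| ≤ |x|) :
    RN (x + a) + RN (a - RN (RN (x + a) - x)) = x + a := by
  rw [RN_fixed hRN (diff_float hp hRN hx ha hax),
    show a - (RN (x + a) - x) = x + a - RN (x + a) by ring,
    RN_fixed hRN (err_float hp hRN hx ha)]
  ring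

end GrowAux

/-- Exactness of the Grow step: two chained Fast2Sums add a float `a` to a
length-2 expansion `(x, y)` exactly, under the stated magnitude/representability
assumptions. -/
theorem grow_exact (p : ℕ) (hp : 1 ≤ p) (RN : ℝ → ℝ)
    (hRN : IsRoundNearest p RN) (x y a : ℝ)
    (hx : FloatRep p x) (hy : FloatRep p y) (ha : FloatRep p a)
    (hxa : |a| ≤ |x|)
    (u₁ v u w : ℝ)
    (hu₁ : u₁ = RN (x + a))
    (hv : v = RN (a - RN (u₁ - x)))
    (hyv : FloatRep p (y + v))
    (hord : |y + v| ≤ |u₁|)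
    (hu : u = RN (u₁ + (y + v)))
    (hw : w = RN ((y + v) - RN (u - u₁))) :
    u + w = x + y + a := by
  have h1 := fast2sum hp hRN hx ha hxa
  rw [← hu₁] at h1
  rw [← hv] at h1
  have hu₁f : FloatRep p u₁ := hu₁ ▸ (hRN (x + a)).1
  have h2 := fast2sum hp hRN hu₁f hyv hord
  rw [← hu] at h2
  rw [← hw] at h2
  linarith
end

section
/- Ineffective weight decay in low precision: let p ≥ 1, let RN be a round-to-nearest function for precision p, let θ be a nonzero precision-p binary floating-point number such that |θ| is not an integer power of 2, and let c be a real number with 0 ≤ c < 2^(−p−1). Then RN(θ − c·θ) = θ, i.e. the decayed parameter rounds back to the original parameter and the weight decay has no effect. -/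
lemma float_is_multiple (p : ℕ) (E : ℤ) (f : ℝ) (hf : FloatRep p f)
    (h : (2:ℝ) ^ E ≤ |f|) : ∃ k : ℤ, f = (k:ℝ) * (2:ℝ) ^ (E - (p:ℤ) + 1) := by
  obtain ⟨m, e, hm, rfl⟩ := hf
  have hmR : |(m:ℝ)| < (2:ℝ) ^ (p:ℤ) := by
    have : ((|m| : ℤ) : ℝ) < ((2 ^ p : ℤ) : ℝ) := by exact_mod_cast hm
    push_cast at this
    rw [zpow_natCast]
    exact this
  have habs : |(m:ℝ) * (2:ℝ) ^ e| = |(m:ℝ)| * (2:ℝ) ^ e := by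
    have h2e : |(2:ℝ) ^ e| = (2:ℝ) ^ e := abs_of_pos (zpow_pos two_pos e)
    rw [abs_mul, h2e]
  have he : E - (p:ℤ) + 1 ≤ e := by
    by_contra h'
    push_neg at h'
    have h1 : |(m:ℝ) * (2:ℝ) ^ e| < (2:ℝ) ^ ((p:ℤ) + e) := by
      rw [habs, zpow_add₀ (two_ne_zero)]
      exact mul_lt_mul_of_pos_right hmR (zpow_pos two_pos e)
    have h2 : (2:ℝ) ^ ((p:ℤ) + e) ≤ (2:ℝ) ^ E :=
      zpow_le_zpow_right₀ one_le_two (by omega)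
    linarith [h.trans_lt (h1.trans_le h2)]
  refine ⟨m * 2 ^ (e - (E - (p:ℤ) + 1)).toNat, ?_⟩
  push_cast
  rw [mul_assoc, ← zpow_natCast (2:ℝ), ← zpow_add₀ (two_ne_zero : (2:ℝ) ≠ 0),
    Int.toNat_of_nonneg (by omega)]
  ring_nf

/-- Ineffective weight decay in low precision: if `θ` is a nonzero float whose
magnitude is not a power of 2 and `0 ≤ c < 2 ^ (-p - 1)`, the decayed value
rounds back to `θ`. -/
theorem ineffective_weight_decay (p : ℕ) (hp : 1 ≤ p) (RN : ℝ → ℝ)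
    (hRN : IsRoundNearest p RN) (θ : ℝ)
    (hθ : FloatRep p θ) (hθ0 : θ ≠ 0)
    (hpow : ¬ ∃ e : ℤ, |θ| = (2 : ℝ) ^ e)
    (c : ℝ) (hc0 : 0 ≤ c) (hc1 : c < (2 : ℝ) ^ (-(p : ℤ) - 1)) :
    RN (θ - c * θ) = θ := by
  obtain ⟨hfloat, hbest⟩ := hRN (θ - c * θ)
  set E : ℤ := Int.log 2 |θ| with hE
  set u : ℝ := (2:ℝ) ^ (E - (p:ℤ) + 1) with hu
  have hupos : 0 < u := zpow_pos two_pos _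
  have hθabs : 0 < |θ| := abs_pos.mpr hθ0
  have h2E : (2:ℝ) ^ E ≤ |θ| := Int.zpow_log_le_self (by norm_num) hθabs
  have h2E' : (2:ℝ) ^ E < |θ| :=
    lt_of_le_of_ne h2E (fun h => hpow ⟨E, h.symm⟩)
  have hlt : |θ| < (2:ℝ) ^ (E + 1) := Int.lt_zpow_succ_log_self (by norm_num) |θ|
  -- distance from x to θ is < u / 2
  have hdist : |RN (θ - c * θ) - (θ - c * θ)| ≤ c * |θ| := by
    have := hbest θ hθ
    calc |RN (θ - c * θ) - (θ - c * θ)| ≤ |θ - (θ - c * θ)| := this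
      _ = c * |θ| := by rw [show θ - (θ - c * θ) = c * θ by ring, abs_mul,
            abs_of_nonneg hc0]
  have hcsmall : c * |θ| < (2:ℝ) ^ (E - (p:ℤ)) := by
    calc c * |θ| < (2:ℝ) ^ (-(p:ℤ) - 1) * (2:ℝ) ^ (E + 1) := by
          apply mul_lt_mul' (le_of_lt hc1) hlt (abs_nonneg θ)
            (zpow_pos two_pos _)
      _ = (2:ℝ) ^ (E - (p:ℤ)) := by
          rw [← zpow_add₀ (two_ne_zero : (2:ℝ) ≠ 0)]; ring_nf
  have hhalf : (2:ℝ) ^ (E - (p:ℤ)) + (2:ℝ) ^ (E - (p:ℤ)) = u := by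
    rw [hu, ← two_mul, show E - (p:ℤ) + 1 = 1 + (E - (p:ℤ)) by ring,
      zpow_add₀ (two_ne_zero : (2:ℝ) ≠ 0), zpow_one]
  -- hence |RN x - θ| < u
  have hclose : |RN (θ - c * θ) - θ| < u := by
    have h1 : |RN (θ - c * θ) - θ| ≤ |RN (θ - c * θ) - (θ - c * θ)| + |(θ - c * θ) - θ| := by
      have := abs_sub_le (RN (θ - c * θ)) (θ - c * θ) θ
      exact this
    have h2 : |(θ - c * θ) - θ| = c * |θ| := by
      rw [show (θ - c * θ) - θ = -(c * θ) by ring, abs_neg, abs_mul,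
        abs_of_nonneg hc0]
    calc |RN (θ - c * θ) - θ| ≤ c * |θ| + c * |θ| := by
          rw [h2] at h1; linarith
      _ < (2:ℝ) ^ (E - (p:ℤ)) + (2:ℝ) ^ (E - (p:ℤ)) := by linarith
      _ = u := hhalf
  -- θ is a multiple of u
  obtain ⟨k, hk⟩ := float_is_multiple p E θ hθ h2E
  set g := RN (θ - c * θ) with hg
  by_contra hne
  -- 2^E is also a multiple of u: 2^E = 2^(p-1) * u
  have h2Eu : (2:ℝ) ^ E = ((2:ℤ) ^ (p - 1) : ℤ) * u := by
    push_cast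
    rw [hu, ← zpow_natCast (2:ℝ) (p-1), ← zpow_add₀ (two_ne_zero : (2:ℝ) ≠ 0)]
    congr 1
    omega
  -- |θ| ≥ 2^E + u
  have hθbig : (2:ℝ) ^ E + u ≤ |θ| := by
    have hkabs : |θ| = (|k| : ℝ) * u := by
      rw [hk, abs_mul, abs_of_pos hupos]
    have hkgt : ((2:ℤ) ^ (p - 1) : ℝ) < (|k| : ℝ) := by
      by_contra hle
      push_neg at hle
      have : |θ| ≤ (2:ℝ) ^ E := by
        rw [hkabs, h2Eu]
        exact mul_le_mul_of_nonneg_right (by exact_mod_cast hle) hupos.le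
      linarith
    have hkge : ((2:ℤ) ^ (p - 1) + 1 : ℤ) ≤ |k| := by exact_mod_cast hkgt
    calc (2:ℝ) ^ E + u = (((2:ℤ) ^ (p - 1) + 1 : ℤ) : ℝ) * u := by
          push_cast; rw [h2Eu]; push_cast; ring
      _ ≤ (|k| : ℝ) * u := by
          exact mul_le_mul_of_nonneg_right (by exact_mod_cast hkge) hupos.le
      _ = |θ| := hkabs.symm
  by_cases hgE : (2:ℝ) ^ E ≤ |g|
  · -- g is a multiple of u too, distinct multiples differ by ≥ u
    obtain ⟨k', hk'⟩ := float_is_multiple p E g hfloat hgE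
    have hkk : k' ≠ k := by
      intro h; apply hne; rw [hg] at hk' ⊢; rw [hk', h, ← hk]
    have : u ≤ |g - θ| := by
      rw [hk, hk', ← sub_mul, abs_mul, abs_of_pos hupos]
      have h1 : (1:ℝ) ≤ |(k' : ℝ) - (k : ℝ)| := by
        have : (1:ℤ) ≤ |k' - k| := Int.one_le_abs (sub_ne_zero.mpr hkk)
        calc (1:ℝ) = ((1:ℤ):ℝ) := by norm_cast
          _ ≤ ((|k' - k| : ℤ) : ℝ) := by exact_mod_cast this
          _ = |(k' : ℝ) - (k : ℝ)| := by push_cast; ring_nf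
      calc u = 1 * u := (one_mul u).symm
        _ ≤ |(k' : ℝ) - (k : ℝ)| * u := mul_le_mul_of_nonneg_right h1 hupos.le
    linarith [hclose]
  · push_neg at hgE
    have : u < |g - θ| := by
      calc u ≤ |θ| - (2:ℝ) ^ E := by linarith
        _ < |θ| - |g| := by linarith
        _ ≤ |g - θ| := by
            have := abs_sub_abs_le_abs_sub θ g
            rw [abs_sub_comm θ g] at this
            linarith
    linarith [hclose]
end
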